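/- For every probability measure μ on E_Δ and every t ≥ 0: (i) M^μ_t = G^{μ,1}_t, where G^{μ,1}_t = {Λ ⊂ Ω : there exist Λ' ∈ F^0_t and Γ ∈ F^0_{t+} with Λ △ Λ' ⊂ Γ and P^h_μ(Γ; t<ζ) = 0}; (ii) the extension of Q̄_{μ,t} to M^μ_t is a well-defined σ-finite measure (in particular its value Q̄_{μ,t}(Λ') does not depend on the choice of Λ'), and the extension of P^h_μ(·; t<ζ) to M^μ_t is a well-defined finite measure. -/

import Mathlib

open MeasureTheory Set Filter
open scoped NNReal ENNReal

noncomputable section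

variable {S : Type*} [MeasurableSpace S] {Ω : Type*}

/-- The natural filtration `F⁰_t = σ(X_s : s ∈ [0,t])` of the process `X`. -/
def F0 (X : ℝ≥0 → Ω → S) (t : ℝ≥0) : MeasurableSpace Ω :=
  ⨆ s ∈ Set.Iic t, MeasurableSpace.comap (X s) inferInstance

/-- `F⁰_∞ = σ(X_s : s ≥ 0)`. -/
def F0inf (X : ℝ≥0 → Ω → S) : MeasurableSpace Ω :=
  ⨆ s : ℝ≥0, MeasurableSpace.comap (X s) inferInstance

/-- `F⁰_{t+} = ⋂_{s > t} F⁰_s`. -/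
def F0plus (X : ℝ≥0 → Ω → S) (t : ℝ≥0) : MeasurableSpace Ω :=
  ⨅ s ∈ Set.Ioi t, F0 X s

/-- The life time `ζ(ω) = inf {t ≥ 0 : X_t(ω) = Δ}` (with value `∞` if the path
never reaches the cemetery `Δ`). -/
def lifetime (Δ : S) (X : ℝ≥0 → Ω → S) (ω : Ω) : ℝ≥0∞ :=
  ⨅ (t : ℝ≥0) (_ : X t ω = Δ), (t : ℝ≥0∞)

variable (Δ : S)

/-- `Q̄_{x,t}[f ; t < ζ] := h(x)·E^h_x[e^{αt}·f/h(X_t) ; t < ζ]`, the σ-finite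
distribution up to time `t` applied to a nonnegative integrand `f`. -/
def Qbar (α : ℝ) (h : S → ℝ≥0∞) (X : ℝ≥0 → Ω → S)
    (P : S → @Measure Ω (F0inf X)) (x : S) (t : ℝ≥0) (f : Ω → ℝ≥0∞) : ℝ≥0∞ :=
  h x * ∫⁻ ω in {ω | (t : ℝ≥0∞) < lifetime Δ X ω},
      ENNReal.ofReal (Real.exp (α * (t : ℝ))) * f ω * (h (X t ω))⁻¹ ∂(P x)

/-- `Q̄_{x,t}(Λ ; t < ζ)` of a set `Λ`. -/
def QbarSet (α : ℝ) (h : S → ℝ≥0∞) (X : ℝ≥0 → Ω → S)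
    (P : S → @Measure Ω (F0inf X)) (x : S) (t : ℝ≥0) (Λ : Set Ω) : ℝ≥0∞ :=
  Qbar Δ α h X P x t (Λ.indicator 1)

/-- `Q̄_{μ,t}(Λ ; t < ζ) = ∫ Q̄_{x,t}(Λ ; t < ζ) μ(dx)` (note `Q̄_{Δ,t} = 0`
automatically since `h Δ = 0`). -/
def Qmu (α : ℝ) (h : S → ℝ≥0∞) (X : ℝ≥0 → Ω → S)
    (P : S → @Measure Ω (F0inf X)) (μ : Measure S) (t : ℝ≥0) (Λ : Set Ω) : ℝ≥0∞ :=
  ∫⁻ x, QbarSet Δ α h X P x t Λ ∂μ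

/-- `P^h_μ(Λ) = ∫ P^h_x(Λ) μ(dx)`. -/
def Pmu (X : ℝ≥0 → Ω → S) (P : S → @Measure Ω (F0inf X)) (μ : Measure S)
    (Λ : Set Ω) : ℝ≥0∞ :=
  ∫⁻ x, P x Λ ∂μ

/-- `P^h_μ(Λ ; t < ζ)`. -/
def PmuT (X : ℝ≥0 → Ω → S) (P : S → @Measure Ω (F0inf X)) (μ : Measure S)
    (t : ℝ≥0) (Λ : Set Ω) : ℝ≥0∞ :=
  ∫⁻ x, P x (Λ ∩ {ω | (t : ℝ≥0∞) < lifetime Δ X ω}) ∂μ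

/-- The augmented σ-field `M^μ_t`. -/
def Mmu (α : ℝ) (h : S → ℝ≥0∞) (X : ℝ≥0 → Ω → S)
    (P : S → @Measure Ω (F0inf X)) (μ : Measure S) (t : ℝ≥0) : Set (Set Ω) :=
  {Λ | ∃ Λ' Γ : Set Ω, MeasurableSet[F0 X t] Λ' ∧ MeasurableSet[F0plus X t] Γ ∧
      symmDiff Λ Λ' ⊆ Γ ∧ ∀ T : ℝ≥0, t < T → Qmu Δ α h X P μ T Γ = 0}

/-- The auxiliary family `G^{μ,1}_t`. -/
def Gmu1 (α : ℝ) (h : S → ℝ≥0∞) (X : ℝ≥0 → Ω → S)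
    (P : S → @Measure Ω (F0inf X)) (μ : Measure S) (t : ℝ≥0) : Set (Set Ω) :=
  {Λ | ∃ Λ' Γ : Set Ω, MeasurableSet[F0 X t] Λ' ∧ MeasurableSet[F0plus X t] Γ ∧
      symmDiff Λ Λ' ⊆ Γ ∧ PmuT Δ X P μ t Γ = 0}

/-- The auxiliary family `G^{μ,2}_t`. -/
def Gmu2 (α : ℝ) (h : S → ℝ≥0∞) (X : ℝ≥0 → Ω → S)
    (P : S → @Measure Ω (F0inf X)) (μ : Measure S) (t : ℝ≥0) : Set (Set Ω) :=
  {Λ | ∃ Λ' Γ : Set Ω, MeasurableSet[F0plus X t] Λ' ∧ MeasurableSet[F0plus X t] Γ ∧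
      symmDiff Λ Λ' ⊆ Γ ∧ PmuT Δ X P μ t Γ = 0}

/-- The `P^h_μ`-augmentation `F^{h,μ}_t` of `F⁰_t` in `F⁰_∞`. -/
def Fhmu (X : ℝ≥0 → Ω → S) (P : S → @Measure Ω (F0inf X)) (μ : Measure S)
    (t : ℝ≥0) : Set (Set Ω) :=
  {Λ | ∃ Λ' Γ : Set Ω, MeasurableSet[F0 X t] Λ' ∧ MeasurableSet[F0inf X] Γ ∧
      symmDiff Λ Λ' ⊆ Γ ∧ Pmu X P μ Γ = 0}

/-- `M_t = ⋂_μ M^μ_t`, the intersection over all probability measures `μ` on `E_Δ`. -/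
def Mt (α : ℝ) (h : S → ℝ≥0∞) (X : ℝ≥0 → Ω → S)
    (P : S → @Measure Ω (F0inf X)) (t : ℝ≥0) : Set (Set Ω) :=
  {Λ | ∀ μ : Measure S, IsProbabilityMeasure μ → Λ ∈ Mmu Δ α h X P μ t}

/-- `M_∞ = σ(⋃_t M_t)`. -/
def Minf (α : ℝ) (h : S → ℝ≥0∞) (X : ℝ≥0 → Ω → S)
    (P : S → @Measure Ω (F0inf X)) : MeasurableSpace Ω :=
  MeasurableSpace.generateFrom {Λ | ∃ t : ℝ≥0, Λ ∈ Mt Δ α h X P t}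

/-- `M^μ_∞ = σ(⋃_t M^μ_t)`. -/
def Mmuinf (α : ℝ) (h : S → ℝ≥0∞) (X : ℝ≥0 → Ω → S)
    (P : S → @Measure Ω (F0inf X)) (μ : Measure S) : MeasurableSpace Ω :=
  MeasurableSpace.generateFrom {Λ | ∃ t : ℝ≥0, Λ ∈ Mmu Δ α h X P μ t}

/-- `M_σ` for an `(M_t)`-stopping time `σ`. -/
def Msigma (α : ℝ) (h : S → ℝ≥0∞) (X : ℝ≥0 → Ω → S)
    (P : S → @Measure Ω (F0inf X)) (σ : Ω → ℝ≥0∞) : Set (Set Ω) :=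
  {Λ | MeasurableSet[Minf Δ α h X P] Λ ∧
      ∀ t : ℝ≥0, Λ ∩ {ω | σ ω ≤ (t : ℝ≥0∞)} ∈ Mt Δ α h X P t}

/-- `M^μ_σ` for an `(M^μ_t)`-stopping time `σ`. -/
def Mmusigma (α : ℝ) (h : S → ℝ≥0∞) (X : ℝ≥0 → Ω → S)
    (P : S → @Measure Ω (F0inf X)) (μ : Measure S) (σ : Ω → ℝ≥0∞) : Set (Set Ω) :=
  {Λ | MeasurableSet[Mmuinf Δ α h X P μ] Λ ∧
      ∀ t : ℝ≥0, Λ ∩ {ω | σ ω ≤ (t : ℝ≥0∞)} ∈ Mmu Δ α h X P μ t}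

/-- `F^{h,μ}_T` for an `(F^{h,μ}_t)`-stopping time `T`. -/
def FhmuStop (X : ℝ≥0 → Ω → S) (P : S → @Measure Ω (F0inf X)) (μ : Measure S)
    (T : Ω → ℝ≥0∞) : Set (Set Ω) :=
  {Λ | ∀ t : ℝ≥0, Λ ∩ {ω | T ω ≤ (t : ℝ≥0∞)} ∈ Fhmu X P μ t}

/-- `X_σ`, with the convention `X_∞ = Δ`. -/
def Xstop (X : ℝ≥0 → Ω → S) (σ : Ω → ℝ≥0∞) (ω : Ω) : S :=
  if σ ω < ∞ then X (σ ω).toNNReal ω else Δ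

/-- The shift `θ_σ` at a random time `σ`. -/
def thetaStop (θ : ℝ≥0 → Ω → Ω) (σ : Ω → ℝ≥0∞) (ω : Ω) : Ω :=
  θ (σ ω).toNNReal ω

/-- `Q̄_{x,σ}[f ; σ < ζ] := h(x)·E^h_x[e^{ασ}·f/h(X_σ) ; σ < ζ]`, the σ-finite
distribution up to a stopping time `σ` applied to a nonnegative integrand `f`. -/
def QbarStop (α : ℝ) (h : S → ℝ≥0∞) (X : ℝ≥0 → Ω → S)
    (P : S → @Measure Ω (F0inf X)) (x : S) (σ : Ω → ℝ≥0∞) (f : Ω → ℝ≥0∞) : ℝ≥0∞ :=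
  h x * ∫⁻ ω in {ω | σ ω < lifetime Δ X ω},
      ENNReal.ofReal (Real.exp (α * (σ ω).toReal)) * f ω * (h (Xstop Δ X σ ω))⁻¹ ∂(P x)

/-- `Q̄_{x,σ}(Λ ; σ < ζ)` of a set `Λ`. -/
def QbarStopSet (α : ℝ) (h : S → ℝ≥0∞) (X : ℝ≥0 → Ω → S)
    (P : S → @Measure Ω (F0inf X)) (x : S) (σ : Ω → ℝ≥0∞) (Λ : Set Ω) : ℝ≥0∞ :=
  QbarStop Δ α h X P x σ (Λ.indicator 1)

/-- The entrance time `D_B = inf {t ≥ 0 : X_t ∈ B}`. -/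
def entranceTime (B : Set S) (X : ℝ≥0 → Ω → S) (ω : Ω) : ℝ≥0∞ :=
  ⨅ (t : ℝ≥0) (_ : X t ω ∈ B), (t : ℝ≥0∞)

/-- The hitting time `σ_B = inf {t > 0 : X_t ∈ B}`. -/
def hittingTime (B : Set S) (X : ℝ≥0 → Ω → S) (ω : Ω) : ℝ≥0∞ :=
  ⨅ (t : ℝ≥0) (_ : 0 < t ∧ X t ω ∈ B), (t : ℝ≥0∞)

/-- A set is universally measurable (`∈ B(E_Δ)*`) if it lies in the completion of
`B(E_Δ)` with respect to every probability measure. -/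
def UniversallyMeasurableSet (A : Set S) : Prop :=
  ∀ ν : Measure S, IsProbabilityMeasure ν → NullMeasurableSet A ν

/-- Iterated kernel integral
`∫ κ_{t₁-t₀}(x,dx₁) ∫ κ_{t₂-t₁}(x₁,dx₂) ⋯ f(x₁,…,xₙ)`, where `t₀` is the
starting time. -/
def iterK (κ : ℝ≥0 → S → Measure S) :
    (n : ℕ) → (Fin (n + 1) → ℝ≥0) → ℝ≥0 → S → ((Fin (n + 1) → S) → ℝ≥0∞) → ℝ≥0∞
  | 0, t, t0, x, f => ∫⁻ y, f (fun _ => y) ∂(κ (t 0 - t0) x)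
  | n + 1, t, t0, x, f =>
      ∫⁻ y, iterK κ n (fun i => t i.succ) (t 0) y (fun v => f (Fin.cons y v))
        ∂(κ (t 0 - t0) x)


/-- `γ = (σ + τ∘θ_σ)_ζ`, the time `σ + τ∘θ_σ` truncated to `∞` off `{σ + τ∘θ_σ < ζ}`. -/
def gammaTime (Δ : S) (X : ℝ≥0 → Ω → S) (θ : ℝ≥0 → Ω → Ω) (σ τ : Ω → ℝ≥0∞)
    (ω : Ω) : ℝ≥0∞ :=
  if σ ω + τ (thetaStop θ σ ω) < lifetime Δ X ω then σ ω + τ (thetaStop θ σ ω)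
  else ∞

end


/-!
Because `X₀ = x` holds `P^h_x`-a.s., the factor `h(x)` in `Q̄_{x,t}` may be replaced by `h(X₀)`;
hence on `F⁰_∞` the functional `Q̄_{μ,t}` is the measure with density `e^{αt} h(X₀) / h(X_t)` with
respect to `P^h_μ(· ; t < ζ)`, where `P^h_μ = ∫ P^h_x μ(dx)`. This density is finite and nonzero on
`{t < ζ}`, so both measures have the same null sets, and since `{t < ζ} = ⋃_{T ↓ t} {T < ζ}`, a set
is `Q̄_{μ,T}`-null for every `T > t` iff it is `P^h_μ(· ; t < ζ)`-null: this is `M^μ_t = G^{μ,1}_t`.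
Every `Λ ∈ M^μ_t` differs from its representative `Λ'` by a null set of both measures, so the two
extensions are the measures themselves evaluated at `Λ`, countably additive on `M^μ_t` because its
elements are null-measurable. The `F⁰_t`-measurable level sets of the density give σ-finiteness.
-/

def aliveAt {S Ω : Type*} (Δ : S) (X : ℝ≥0 → Ω → S) (t : ℝ≥0) : Set Ω :=
  {ω | (t : ℝ≥0∞) < lifetime Δ X ω}

noncomputable def qbarDensity {S Ω : Type*} (α : ℝ) (h : S → ℝ≥0∞) (X : ℝ≥0 → Ω → S)
    (t : ℝ≥0) (ω : Ω) : ℝ≥0∞ :=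
  ENNReal.ofReal (Real.exp (α * t)) * h (X 0 ω) * (h (X t ω))⁻¹

noncomputable def pmuTMeasure {S Ω : Type*} [MeasurableSpace S] (Δ : S) (X : ℝ≥0 → Ω → S)
    (P : S → @Measure Ω (F0inf X)) (μ : Measure S) (t : ℝ≥0) : @Measure Ω (F0inf X) :=
  (μ.bind P).restrict (aliveAt Δ X t)

noncomputable def qmuMeasure {S Ω : Type*} [MeasurableSpace S] (Δ : S) (α : ℝ) (h : S → ℝ≥0∞)
    (X : ℝ≥0 → Ω → S) (P : S → @Measure Ω (F0inf X)) (μ : Measure S) (t : ℝ≥0) :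
    @Measure Ω (F0inf X) :=
  (pmuTMeasure Δ X P μ t).withDensity (qbarDensity α h X t)

section Lifetime

variable {S Ω : Type*} {Δ : S} {X : ℝ≥0 → Ω → S}

theorem lifetime_le_of_eq_cemetery {ω : Ω} {s : ℝ≥0} (hs : X s ω = Δ) :
    lifetime Δ X ω ≤ s :=
  iInf₂_le s hs

theorem ne_cemetery_of_mem_aliveAt {ω : Ω} {t : ℝ≥0} (hω : ω ∈ aliveAt Δ X t) : X t ω ≠ Δ :=
  fun hΔ => (lifetime_le_of_eq_cemetery hΔ).not_gt hω

theorem le_lifetime_of_ne_cemetery (habs : ∀ ω s t, s ≤ t → X s ω = Δ → X t ω = Δ)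
    {ω : Ω} {s : ℝ≥0} (hs : X s ω ≠ Δ) : (s : ℝ≥0∞) ≤ lifetime Δ X ω :=
  le_iInf₂ fun u hu => ENNReal.coe_le_coe.2 <| le_of_not_gt fun hus => hs (habs ω u s hus.le hu)

theorem aliveAt_anti : Antitone (aliveAt Δ X) :=
  fun _ _ hst _ hω => lt_of_le_of_lt (ENNReal.coe_le_coe.2 hst) hω

theorem aliveAt_eq_iUnion (t : ℝ≥0) :
    aliveAt Δ X t = ⋃ n : ℕ, aliveAt Δ X (t + ((n : ℝ≥0) + 1)⁻¹) := by
  refine (iUnion_subset fun n => aliveAt_anti le_self_add).antisymm' fun ω hω => ?_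
  obtain ⟨r, htr, hr⟩ := ENNReal.lt_iff_exists_nnreal_btwn.1 hω
  obtain ⟨n, hn⟩ := exists_nat_one_div_lt (tsub_pos_of_lt (ENNReal.coe_lt_coe.1 htr))
  rw [one_div, lt_tsub_iff_left] at hn
  exact mem_iUnion.2 ⟨n, lt_trans (ENNReal.coe_lt_coe.2 hn) hr⟩

theorem aliveAt_eq_iUnion_preimage (habs : ∀ ω s t, s ≤ t → X s ω = Δ → X t ω = Δ)
    (t : ℝ≥0) : aliveAt Δ X t = ⋃ n : ℕ, X (t + ((n : ℝ≥0) + 1)⁻¹) ⁻¹' {Δ}ᶜ := by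
  refine ((aliveAt_eq_iUnion t).trans_subset
    (iUnion_mono fun n ω => ne_cemetery_of_mem_aliveAt)).antisymm ?_
  refine iUnion_subset fun n ω hω => lt_of_lt_of_le ?_ (le_lifetime_of_ne_cemetery habs hω)
  exact ENNReal.coe_lt_coe.2 (lt_add_of_pos_right t (by positivity))

theorem measure_inter_aliveAt_eq_zero_iff {mΩ : MeasurableSpace Ω} (ρ : Measure Ω) (Γ : Set Ω)
    (t : ℝ≥0) :
    ρ (Γ ∩ aliveAt Δ X t) = 0 ↔ ∀ T, t < T → ρ (Γ ∩ aliveAt Δ X T) = 0 := by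
  refine ⟨fun h0 T hT => measure_mono_null (inter_subset_inter_right Γ (aliveAt_anti hT.le)) h0,
    fun h0 => ?_⟩
  rw [aliveAt_eq_iUnion, inter_iUnion]
  exact measure_iUnion_null fun n => h0 _ (lt_add_of_pos_right t (by positivity))

end Lifetime

section Filtration

variable {S Ω : Type*} [MeasurableSpace S] {X : ℝ≥0 → Ω → S}

theorem measurable_F0inf (s : ℝ≥0) : Measurable[F0inf X] (X s) :=
  measurable_iff_comap_le.2 <| le_iSup (fun s => MeasurableSpace.comap (X s) inferInstance) s

theorem measurable_F0 {s t : ℝ≥0} (hst : s ≤ t) : Measurable[F0 X t] (X s) :=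
  measurable_iff_comap_le.2 <|
    le_iSup₂ (f := fun s (_ : s ∈ Iic t) => MeasurableSpace.comap (X s) inferInstance) s hst

theorem F0_le_F0inf (t : ℝ≥0) : F0 X t ≤ F0inf X :=
  iSup₂_le fun s _ => le_iSup (fun s => MeasurableSpace.comap (X s) inferInstance) s

theorem F0plus_le_F0inf (t : ℝ≥0) : F0plus X t ≤ F0inf X :=
  (iInf₂_le (t + 1) (lt_add_one t)).trans (F0_le_F0inf (t + 1))

theorem measurableSet_aliveAt [MeasurableSingletonClass S] {Δ : S}
    (habs : ∀ ω s t, s ≤ t → X s ω = Δ → X t ω = Δ) (t : ℝ≥0) :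
    MeasurableSet[F0inf X] (aliveAt Δ X t) := by
  rw [aliveAt_eq_iUnion_preimage habs]
  exact MeasurableSet.iUnion fun n => measurable_F0inf _ (measurableSet_singleton Δ).compl

theorem measurable_qbarDensity {α : ℝ} {h : S → ℝ≥0∞} (hh : Measurable h) (t : ℝ≥0) :
    Measurable[F0 X t] (qbarDensity α h X t) :=
  (measurable_const.mul (hh.comp (measurable_F0 (zero_le : 0 ≤ t)))).mul
    (hh.comp (measurable_F0 le_rfl)).inv

end Filtration

section Density

variable {S Ω : Type*} {Δ : S} {α : ℝ} {h : S → ℝ≥0∞} {X : ℝ≥0 → Ω → S} {t : ℝ≥0} {ω : Ω}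

theorem qbarDensity_ne_zero (h_pos : ∀ x, x ≠ Δ → 0 < h x ∧ h x < ∞)
    (hω : ω ∈ aliveAt Δ X t) : qbarDensity α h X t ω ≠ 0 := by
  have hω0 : ω ∈ aliveAt Δ X 0 := aliveAt_anti (zero_le : 0 ≤ t) hω
  refine mul_ne_zero (mul_ne_zero (ENNReal.ofReal_pos.2 (Real.exp_pos _)).ne' ?_) ?_
  · exact (h_pos _ (ne_cemetery_of_mem_aliveAt hω0)).1.ne'
  · exact ENNReal.inv_ne_zero.2 (h_pos _ (ne_cemetery_of_mem_aliveAt hω)).2.ne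

theorem qbarDensity_ne_top (h_cem : h Δ = 0) (h_pos : ∀ x, x ≠ Δ → 0 < h x ∧ h x < ∞)
    (hω : X t ω ≠ Δ) : qbarDensity α h X t ω ≠ ∞ := by
  have h_fin : ∀ x, h x ≠ ∞ := fun x => by
    rcases eq_or_ne x Δ with rfl | hx
    · simp [h_cem]
    · exact (h_pos x hx).2.ne
  refine ENNReal.mul_ne_top (ENNReal.mul_ne_top ENNReal.ofReal_ne_top (h_fin _)) ?_
  exact ENNReal.inv_ne_top.2 (h_pos _ hω).1.ne'

end Density

section Representation

variable {S Ω : Type*} [MeasurableSpace S] {Δ : S} {α : ℝ} {h : S → ℝ≥0∞}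
  {X : ℝ≥0 → Ω → S} {P : S → @Measure Ω (F0inf X)} {μ : Measure S} {T : ℝ≥0} {Λ : Set Ω}

theorem QbarSet_eq_setLIntegral (hh : Measurable h) {x : S} (hstart : ∀ᵐ ω ∂P x, X 0 ω = x)
    (hΛ : MeasurableSet[F0inf X] Λ) :
    QbarSet Δ α h X P x T Λ = ∫⁻ ω in Λ ∩ aliveAt Δ X T, qbarDensity α h X T ω ∂P x := by
  let := F0inf X
  set c := ENNReal.ofReal (Real.exp (α * T))
  have hg : Measurable fun ω => c * (h (X T ω))⁻¹ :=
    measurable_const.mul (hh.comp (measurable_F0inf T)).inv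
  calc QbarSet Δ α h X P x T Λ
      = h x * ∫⁻ ω in Λ ∩ aliveAt Δ X T, c * (h (X T ω))⁻¹ ∂P x := by
        rw [QbarSet, Qbar, ← Measure.restrict_restrict hΛ, ← lintegral_indicator hΛ]
        congr 1
        refine lintegral_congr fun ω => ?_
        by_cases hω : ω ∈ Λ <;> simp [hω, c]
    _ = ∫⁻ ω in Λ ∩ aliveAt Δ X T, h x * (c * (h (X T ω))⁻¹) ∂P x :=
        (lintegral_const_mul _ hg).symm
    _ = ∫⁻ ω in Λ ∩ aliveAt Δ X T, qbarDensity α h X T ω ∂P x := by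
        refine lintegral_congr_ae (ae_restrict_of_ae ?_)
        filter_upwards [hstart] with ω hω
        rw [qbarDensity, hω, mul_comm c (h x), mul_assoc]

theorem Qmu_eq_qmuMeasure_apply [MeasurableSingletonClass S] (hh : Measurable h)
    (habs : ∀ ω s t, s ≤ t → X s ω = Δ → X t ω = Δ) (hP : Measurable P)
    (hstart : ∀ x, ∀ᵐ ω ∂P x, X 0 ω = x) (hΛ : MeasurableSet[F0inf X] Λ) :
    Qmu Δ α h X P μ T Λ = qmuMeasure Δ α h X P μ T Λ := by
  let := F0inf X
  have hΛA : MeasurableSet (Λ ∩ aliveAt Δ X T) := hΛ.inter (measurableSet_aliveAt habs T)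
  have hψ : Measurable (qbarDensity α h X T) :=
    (measurable_qbarDensity hh T).mono (F0_le_F0inf T) le_rfl
  rw [Qmu, qmuMeasure, pmuTMeasure, withDensity_apply _ hΛ, Measure.restrict_restrict hΛ,
    ← lintegral_indicator hΛA,
    Measure.lintegral_bind hP.aemeasurable (hψ.indicator hΛA).aemeasurable]
  refine lintegral_congr fun x => ?_
  rw [lintegral_indicator hΛA, QbarSet_eq_setLIntegral hh (hstart x) hΛ]

theorem PmuT_eq_pmuTMeasure_apply [MeasurableSingletonClass S]
    (habs : ∀ ω s t, s ≤ t → X s ω = Δ → X t ω = Δ) (hP : Measurable P)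
    (hΛ : MeasurableSet[F0inf X] Λ) :
    PmuT Δ X P μ T Λ = pmuTMeasure Δ X P μ T Λ := by
  let := F0inf X
  rw [pmuTMeasure, Measure.restrict_apply hΛ,
    Measure.bind_apply (hΛ.inter (measurableSet_aliveAt habs T)) hP.aemeasurable]
  rfl

theorem qmuMeasure_eq_zero_iff (hh : Measurable h) (h_pos : ∀ x, x ≠ Δ → 0 < h x ∧ h x < ∞)
    (hΛ : MeasurableSet[F0inf X] Λ) :
    qmuMeasure Δ α h X P μ T Λ = 0 ↔ pmuTMeasure Δ X P μ T Λ = 0 := by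
  let := F0inf X
  have hψ : Measurable (qbarDensity α h X T) :=
    (measurable_qbarDensity hh T).mono (F0_le_F0inf T) le_rfl
  have hne : MeasurableSet {ω | qbarDensity α h X T ω ≠ 0} := hψ (measurableSet_singleton 0).compl
  rw [qmuMeasure, withDensity_apply_eq_zero hψ, pmuTMeasure,
    Measure.restrict_apply (hne.inter hΛ), Measure.restrict_apply hΛ, inter_assoc,
    inter_eq_right.2 (show Λ ∩ aliveAt Δ X T ⊆ {ω | qbarDensity α h X T ω ≠ 0} from
      fun ω hω => qbarDensity_ne_zero h_pos hω.2)]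

theorem mem_Mmu_of_measurableSet {t : ℝ≥0} (hΛ : MeasurableSet[F0 X t] Λ) :
    Λ ∈ Mmu Δ α h X P μ t :=
  ⟨Λ, ∅, hΛ, @MeasurableSet.empty _ (F0plus X t), by simp,
    fun T _ => by simp [Qmu, QbarSet, Qbar]⟩

end Representation

section Augmentation

variable {S Ω : Type*} [MeasurableSpace S] [MeasurableSingletonClass S] {Δ : S} {α : ℝ}
  {h : S → ℝ≥0∞} {X : ℝ≥0 → Ω → S} {P : S → @Measure Ω (F0inf X)} {μ : Measure S} {t : ℝ≥0}

theorem forall_Qmu_eq_zero_iff_PmuT_eq_zero (hh : Measurable h)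
    (h_pos : ∀ x, x ≠ Δ → 0 < h x ∧ h x < ∞) (habs : ∀ ω s t, s ≤ t → X s ω = Δ → X t ω = Δ)
    (hP : Measurable P) (hstart : ∀ x, ∀ᵐ ω ∂P x, X 0 ω = x) {Γ : Set Ω}
    (hΓ : MeasurableSet[F0inf X] Γ) :
    (∀ T, t < T → Qmu Δ α h X P μ T Γ = 0) ↔ PmuT Δ X P μ t Γ = 0 := by
  simp only [Qmu_eq_qmuMeasure_apply hh habs hP hstart hΓ, qmuMeasure_eq_zero_iff hh h_pos hΓ,
    PmuT_eq_pmuTMeasure_apply habs hP hΓ, pmuTMeasure, Measure.restrict_apply hΓ]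
  exact (measure_inter_aliveAt_eq_zero_iff _ Γ t).symm

theorem Mmu_eq_Gmu1 (hh : Measurable h)
    (h_pos : ∀ x, x ≠ Δ → 0 < h x ∧ h x < ∞) (habs : ∀ ω s t, s ≤ t → X s ω = Δ → X t ω = Δ)
    (hP : Measurable P) (hstart : ∀ x, ∀ᵐ ω ∂P x, X 0 ω = x) :
    Mmu Δ α h X P μ t = Gmu1 Δ α h X P μ t := by
  ext Λ
  refine exists₂_congr fun Λ' Γ => and_congr_right fun _ => and_congr_right fun hΓ =>
    and_congr_right fun _ => ?_
  exact forall_Qmu_eq_zero_iff_PmuT_eq_zero hh h_pos habs hP hstart (F0plus_le_F0inf t _ hΓ)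

theorem ae_eq_of_symmDiff_subset_of_forall_Qmu_eq_zero {ρ : @Measure Ω (F0inf X)}
    (hρ : ρ ≪ pmuTMeasure Δ X P μ t) (hh : Measurable h)
    (h_pos : ∀ x, x ≠ Δ → 0 < h x ∧ h x < ∞) (habs : ∀ ω s t, s ≤ t → X s ω = Δ → X t ω = Δ)
    (hP : Measurable P) (hstart : ∀ x, ∀ᵐ ω ∂P x, X 0 ω = x) {Λ Λ' Γ : Set Ω}
    (hΓ : MeasurableSet[F0plus X t] Γ)
    (hsub : symmDiff Λ Λ' ⊆ Γ) (hQ : ∀ T, t < T → Qmu Δ α h X P μ T Γ = 0) :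
    Λ =ᵐ[ρ] Λ' := by
  have hΓ' := F0plus_le_F0inf t _ hΓ
  refine measure_symmDiff_eq_zero_iff.1 (measure_mono_null hsub (hρ ?_))
  rw [← PmuT_eq_pmuTMeasure_apply habs hP hΓ']
  exact (forall_Qmu_eq_zero_iff_PmuT_eq_zero hh h_pos habs hP hstart hΓ').1 hQ

theorem measure_iUnion_of_mem_Mmu {ρ : @Measure Ω (F0inf X)}
    (hρ : ρ ≪ pmuTMeasure Δ X P μ t) (hh : Measurable h)
    (h_pos : ∀ x, x ≠ Δ → 0 < h x ∧ h x < ∞) (habs : ∀ ω s t, s ≤ t → X s ω = Δ → X t ω = Δ)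
    (hP : Measurable P) (hstart : ∀ x, ∀ᵐ ω ∂P x, X 0 ω = x) ⦃A : ℕ → Set Ω⦄
    (hA : ∀ n, A n ∈ Mmu Δ α h X P μ t) (hd : Pairwise (Function.onFun Disjoint A)) :
    ρ (⋃ n, A n) = ∑' n, ρ (A n) := by
  refine measure_iUnion₀ (hd.mono fun _ _ h => h.aedisjoint) fun n => ?_
  obtain ⟨Λ', Γ, hΛ', hΓ, hsub, hQ⟩ := hA n
  exact (F0_le_F0inf t _ hΛ').nullMeasurableSet.congr
    (ae_eq_of_symmDiff_subset_of_forall_Qmu_eq_zero hρ hh h_pos habs hP hstart hΓ hsub hQ).symm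

theorem qmuMeasure_apply_of_symmDiff_subset (hh : Measurable h)
    (h_pos : ∀ x, x ≠ Δ → 0 < h x ∧ h x < ∞) (habs : ∀ ω s t, s ≤ t → X s ω = Δ → X t ω = Δ)
    (hP : Measurable P) (hstart : ∀ x, ∀ᵐ ω ∂P x, X 0 ω = x) ⦃Λ Λ' Γ : Set Ω⦄
    (hΛ' : MeasurableSet[F0 X t] Λ')
    (hΓ : MeasurableSet[F0plus X t] Γ) (hsub : symmDiff Λ Λ' ⊆ Γ)
    (hQ : ∀ T, t < T → Qmu Δ α h X P μ T Γ = 0) :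
    qmuMeasure Δ α h X P μ t Λ = Qmu Δ α h X P μ t Λ' :=
  (measure_congr (ae_eq_of_symmDiff_subset_of_forall_Qmu_eq_zero
    (withDensity_absolutelyContinuous _ _) hh h_pos habs hP hstart hΓ hsub hQ)).trans
    (Qmu_eq_qmuMeasure_apply hh habs hP hstart (F0_le_F0inf t _ hΛ')).symm

theorem pmuTMeasure_apply_of_symmDiff_subset (hh : Measurable h)
    (h_pos : ∀ x, x ≠ Δ → 0 < h x ∧ h x < ∞) (habs : ∀ ω s t, s ≤ t → X s ω = Δ → X t ω = Δ)
    (hP : Measurable P) (hstart : ∀ x, ∀ᵐ ω ∂P x, X 0 ω = x) ⦃Λ Λ' Γ : Set Ω⦄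
    (hΛ' : MeasurableSet[F0 X t] Λ')
    (hΓ : MeasurableSet[F0plus X t] Γ) (hsub : symmDiff Λ Λ' ⊆ Γ)
    (hQ : ∀ T, t < T → Qmu Δ α h X P μ T Γ = 0) :
    pmuTMeasure Δ X P μ t Λ = PmuT Δ X P μ t Λ' :=
  (measure_congr (ae_eq_of_symmDiff_subset_of_forall_Qmu_eq_zero .rfl hh h_pos habs hP hstart
    hΓ hsub hQ)).trans
    (PmuT_eq_pmuTMeasure_apply habs hP (F0_le_F0inf t _ hΛ')).symm

end Augmentation

section SigmaFinite

variable {S Ω : Type*} [MeasurableSpace S] {Δ : S} {α : ℝ} {h : S → ℝ≥0∞}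
  {X : ℝ≥0 → Ω → S} {P : S → @Measure Ω (F0inf X)} {μ : Measure S}

theorem exists_F0_cover_qmuMeasure_lt_top [MeasurableSingletonClass S]
    [IsFiniteMeasure (μ.bind P)] (hh : Measurable h) (h_cem : h Δ = 0)
    (h_pos : ∀ x, x ≠ Δ → 0 < h x ∧ h x < ∞) (t : ℝ≥0) :
    ∃ B : ℕ → Set Ω, (∀ n, MeasurableSet[F0 X t] (B n)) ∧ ⋃ n, B n = univ ∧
      ∀ n, qmuMeasure Δ α h X P μ t (B n) < ∞ := by
  set B : ℕ → Set Ω := fun n => {ω | X t ω = Δ ∨ qbarDensity α h X t ω ≤ n}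
  have hB : ∀ n, MeasurableSet[F0 X t] (B n) := fun n =>
    let _ := F0 X t
    (measurable_F0 le_rfl (measurableSet_singleton Δ)).union
      (measurableSet_le (measurable_qbarDensity hh t) measurable_const)
  refine ⟨B, hB, eq_univ_of_forall fun ω => ?_, fun n => ?_⟩
  · by_cases hω : X t ω = Δ
    · exact mem_iUnion.2 ⟨0, Or.inl hω⟩
    · obtain ⟨n, hn⟩ := ENNReal.exists_nat_gt (qbarDensity_ne_top (α := α) h_cem h_pos hω)
      exact mem_iUnion.2 ⟨n, Or.inr hn.le⟩
  have hBn := F0_le_F0inf t _ (hB n)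
  calc qmuMeasure Δ α h X P μ t (B n)
      = ∫⁻ ω in B n ∩ aliveAt Δ X t, qbarDensity α h X t ω ∂μ.bind P := by
        rw [qmuMeasure, pmuTMeasure, withDensity_apply _ hBn, Measure.restrict_restrict hBn]
    _ ≤ ∫⁻ _ in B n ∩ aliveAt Δ X t, (n : ℝ≥0∞) ∂μ.bind P :=
        setLIntegral_mono measurable_const fun ω hω =>
          hω.1.resolve_left (ne_cemetery_of_mem_aliveAt hω.2)
    _ < ∞ := by
        rw [setLIntegral_const]
        exact ENNReal.mul_lt_top (ENNReal.natCast_lt_top n) (measure_lt_top _ _)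

end SigmaFinite

theorem Mmu_eq_Gmu1_and_extensions_well_defined_general
    {S : Type*} [MeasurableSpace S] [StandardBorelSpace S] {Ω : Type*} (Δ : S)
    (X : ℝ≥0 → Ω → S) (P : S → @Measure Ω (F0inf X))
    (h : S → ℝ≥0∞) (α : ℝ)
    (h_meas : Measurable h) (h_cem : h Δ = 0)
    (h_pos : ∀ x : S, x ≠ Δ → 0 < h x ∧ h x < ∞)
    (hX_absorb : ∀ (ω : Ω) (s t : ℝ≥0), s ≤ t → X s ω = Δ → X t ω = Δ)
    (hP_prob : ∀ x : S, IsProbabilityMeasure (P x))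
    (hP_meas : ∀ Λ : Set Ω, MeasurableSet[F0inf X] Λ → Measurable fun x => P x Λ)
    (hP_start : ∀ x : S, P x {ω | X 0 ω = x} = 1)
    :
    ∀ (μ : Measure S), IsProbabilityMeasure μ → ∀ t : ℝ≥0,
      Mmu Δ α h X P μ t = Gmu1 Δ α h X P μ t ∧
      (∀ Λ ∈ Mmu Δ α h X P μ t, ∀ Λ₁ Γ₁ Λ₂ Γ₂ : Set Ω,
        (MeasurableSet[F0 X t] Λ₁ ∧ MeasurableSet[F0plus X t] Γ₁ ∧
          symmDiff Λ Λ₁ ⊆ Γ₁ ∧ ∀ T : ℝ≥0, t < T → Qmu Δ α h X P μ T Γ₁ = 0) →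
        (MeasurableSet[F0 X t] Λ₂ ∧ MeasurableSet[F0plus X t] Γ₂ ∧
          symmDiff Λ Λ₂ ⊆ Γ₂ ∧ ∀ T : ℝ≥0, t < T → Qmu Δ α h X P μ T Γ₂ = 0) →
        Qmu Δ α h X P μ t Λ₁ = Qmu Δ α h X P μ t Λ₂ ∧
          PmuT Δ X P μ t Λ₁ = PmuT Δ X P μ t Λ₂) ∧
      (∃ ν : Set Ω → ℝ≥0∞,
        (∀ Λ Λ' Γ : Set Ω, MeasurableSet[F0 X t] Λ' → MeasurableSet[F0plus X t] Γ →
          symmDiff Λ Λ' ⊆ Γ → (∀ T : ℝ≥0, t < T → Qmu Δ α h X P μ T Γ = 0) →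
          ν Λ = Qmu Δ α h X P μ t Λ') ∧
        ν ∅ = 0 ∧
        (∀ A : ℕ → Set Ω, (∀ n, A n ∈ Mmu Δ α h X P μ t) →
          Pairwise (Function.onFun Disjoint A) → ν (⋃ n, A n) = ∑' n, ν (A n)) ∧
        (∃ B : ℕ → Set Ω, (∀ n, B n ∈ Mmu Δ α h X P μ t) ∧ (⋃ n, B n) = Set.univ ∧
          ∀ n, ν (B n) < ∞)) ∧
      (∃ ν' : Set Ω → ℝ≥0∞,
        (∀ Λ Λ' Γ : Set Ω, MeasurableSet[F0 X t] Λ' → MeasurableSet[F0plus X t] Γ →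
          symmDiff Λ Λ' ⊆ Γ → (∀ T : ℝ≥0, t < T → Qmu Δ α h X P μ T Γ = 0) →
          ν' Λ = PmuT Δ X P μ t Λ') ∧
        ν' ∅ = 0 ∧
        (∀ A : ℕ → Set Ω, (∀ n, A n ∈ Mmu Δ α h X P μ t) →
          Pairwise (Function.onFun Disjoint A) → ν' (⋃ n, A n) = ∑' n, ν' (A n)) ∧
        ν' Set.univ < ∞) := by
  intro μ hμ t
  let := F0inf X
  have hP : Measurable P := Measure.measurable_of_measurable_coe P hP_meas
  have hstart : ∀ x, ∀ᵐ ω ∂P x, X 0 ω = x := fun x =>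
    have := hP_prob x
    have hX0 : MeasurableSet[F0inf X] {ω | X 0 ω = x} :=
      measurable_F0inf 0 (measurableSet_singleton x)
    (ae_iff_measure_eq hX0.nullMeasurableSet).2 (by rw [hP_start x, measure_univ])
  have : IsProbabilityMeasure (μ.bind P) :=
    isProbabilityMeasure_bind hP.aemeasurable (ae_of_all _ hP_prob)
  have hQrep := qmuMeasure_apply_of_symmDiff_subset (α := α) (μ := μ) (t := t)
    h_meas h_pos hX_absorb hP hstart
  have hPrep := pmuTMeasure_apply_of_symmDiff_subset (α := α) (μ := μ) (t := t)
    h_meas h_pos hX_absorb hP hstart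
  obtain ⟨B, hB, hBcover, hBfin⟩ :=
    exists_F0_cover_qmuMeasure_lt_top (α := α) (P := P) (μ := μ) h_meas h_cem h_pos t
  refine ⟨Mmu_eq_Gmu1 h_meas h_pos hX_absorb hP hstart,
    fun Λ _ Λ₁ Γ₁ Λ₂ Γ₂ ⟨hΛ₁, hΓ₁, hsub₁, hQ₁⟩ ⟨hΛ₂, hΓ₂, hsub₂, hQ₂⟩ =>
      ⟨(hQrep hΛ₁ hΓ₁ hsub₁ hQ₁).symm.trans (hQrep hΛ₂ hΓ₂ hsub₂ hQ₂),
        (hPrep hΛ₁ hΓ₁ hsub₁ hQ₁).symm.trans (hPrep hΛ₂ hΓ₂ hsub₂ hQ₂)⟩,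
    ⟨qmuMeasure Δ α h X P μ t, hQrep, measure_empty,
      measure_iUnion_of_mem_Mmu (withDensity_absolutelyContinuous _ _) h_meas h_pos
        hX_absorb hP hstart,
      B, fun n => mem_Mmu_of_measurableSet (hB n), hBcover, hBfin⟩,
    ⟨pmuTMeasure Δ X P μ t, hPrep, measure_empty,
      measure_iUnion_of_mem_Mmu .rfl h_meas h_pos hX_absorb hP hstart,
      measure_lt_top ((μ.bind P).restrict _) univ⟩⟩

theorem Mmu_eq_Gmu1_and_extensions_well_defined
    {S : Type*} [MeasurableSpace S] [TopologicalSpace S] [BorelSpace S]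
    [StandardBorelSpace S] {Ω : Type*} (Δ : S)
    (X : ℝ≥0 → Ω → S) (θ : ℝ≥0 → Ω → Ω) (P : S → @Measure Ω (F0inf X))
    (h : S → ℝ≥0∞) (α : ℝ) (hα : 0 < α)
    (h_meas : Measurable h) (h_cem : h Δ = 0)
    (h_pos : ∀ x : S, x ≠ Δ → 0 < h x ∧ h x < ∞)
    (hX_rc : ∀ (ω : Ω) (t : ℝ≥0),
      Filter.Tendsto (fun s => X s ω) (nhdsWithin t (Set.Ioi t)) (nhds (X t ω)))
    (hX_absorb : ∀ (ω : Ω) (s t : ℝ≥0), s ≤ t → X s ω = Δ → X t ω = Δ)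
    (hshift : ∀ (s t : ℝ≥0) (ω : Ω), X t (θ s ω) = X (t + s) ω)
    (hP_prob : ∀ x : S, IsProbabilityMeasure (P x))
    (hP_meas : ∀ Λ : Set Ω, MeasurableSet[F0inf X] Λ → Measurable fun x => P x Λ)
    (hP_start : ∀ x : S, P x {ω | X 0 ω = x} = 1)
    (hMarkov : ∀ (s : ℝ≥0) (x : S) (Y : Ω → ℝ≥0∞), Measurable[F0inf X] Y →
      ∀ Λ : Set Ω, MeasurableSet[F0plus X s] Λ →
        ∫⁻ ω in Λ, Y (θ s ω) ∂(P x)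
          = ∫⁻ ω in Λ, (∫⁻ ω', Y ω' ∂(P (X s ω))) ∂(P x))
    (Fk : ℕ → Set S) (hFk_meas : ∀ k, MeasurableSet (Fk k))
    (hFk_mono : Monotone Fk) (hFk_sub : ∀ k, Δ ∉ Fk k)
    (hFk_bd : ∀ k, ∃ c C : ℝ≥0∞, 0 < c ∧ C < ∞ ∧ ∀ x ∈ Fk k, c ≤ h x ∧ h x ≤ C)
    (hFk_full : ∀ x : S, x ≠ Δ →
      P x {ω | ∀ s : ℝ≥0, (s : ℝ≥0∞) < lifetime Δ X ω → X s ω ∈ ⋃ k, Fk k} = 1)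
    :
    ∀ (μ : Measure S), IsProbabilityMeasure μ → ∀ t : ℝ≥0,
      Mmu Δ α h X P μ t = Gmu1 Δ α h X P μ t ∧
      (∀ Λ ∈ Mmu Δ α h X P μ t, ∀ Λ₁ Γ₁ Λ₂ Γ₂ : Set Ω,
        (MeasurableSet[F0 X t] Λ₁ ∧ MeasurableSet[F0plus X t] Γ₁ ∧
          symmDiff Λ Λ₁ ⊆ Γ₁ ∧ ∀ T : ℝ≥0, t < T → Qmu Δ α h X P μ T Γ₁ = 0) →
        (MeasurableSet[F0 X t] Λ₂ ∧ MeasurableSet[F0plus X t] Γ₂ ∧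
          symmDiff Λ Λ₂ ⊆ Γ₂ ∧ ∀ T : ℝ≥0, t < T → Qmu Δ α h X P μ T Γ₂ = 0) →
        Qmu Δ α h X P μ t Λ₁ = Qmu Δ α h X P μ t Λ₂ ∧
          PmuT Δ X P μ t Λ₁ = PmuT Δ X P μ t Λ₂) ∧
      (∃ ν : Set Ω → ℝ≥0∞,
        (∀ Λ Λ' Γ : Set Ω, MeasurableSet[F0 X t] Λ' → MeasurableSet[F0plus X t] Γ →
          symmDiff Λ Λ' ⊆ Γ → (∀ T : ℝ≥0, t < T → Qmu Δ α h X P μ T Γ = 0) →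
          ν Λ = Qmu Δ α h X P μ t Λ') ∧
        ν ∅ = 0 ∧
        (∀ A : ℕ → Set Ω, (∀ n, A n ∈ Mmu Δ α h X P μ t) →
          Pairwise (Function.onFun Disjoint A) → ν (⋃ n, A n) = ∑' n, ν (A n)) ∧
        (∃ B : ℕ → Set Ω, (∀ n, B n ∈ Mmu Δ α h X P μ t) ∧ (⋃ n, B n) = Set.univ ∧
          ∀ n, ν (B n) < ∞)) ∧
      (∃ ν' : Set Ω → ℝ≥0∞,
        (∀ Λ Λ' Γ : Set Ω, MeasurableSet[F0 X t] Λ' → MeasurableSet[F0plus X t] Γ →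
          symmDiff Λ Λ' ⊆ Γ → (∀ T : ℝ≥0, t < T → Qmu Δ α h X P μ T Γ = 0) →
          ν' Λ = PmuT Δ X P μ t Λ') ∧
        ν' ∅ = 0 ∧
        (∀ A : ℕ → Set Ω, (∀ n, A n ∈ Mmu Δ α h X P μ t) →
          Pairwise (Function.onFun Disjoint A) → ν' (⋃ n, A n) = ∑' n, ν' (A n)) ∧
        ν' Set.univ < ∞) :=
  Mmu_eq_Gmu1_and_extensions_well_defined_general Δ X P h α h_meas h_cem h_pos hX_absorb hP_prob
    hP_meas hP_start
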